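/- arXiv:1610.01228 — 2 statements merged into one kernel-verified Lean document; each statement's English description precedes it below -/
import Mathlib

section
/- For every z > 0, the integral ∫₀^∞ f(x/z)·4cosh(x/2) dx equals 256π²z·cosh²(z/4)/(z²+4π²)², where f(x) = (1-x)cos(πx) + sin(πx)/π for 0 ≤ x ≤ 1 and f(x) = 0 for x > 1. -/
open Real MeasureTheory

/-- Evaluation of `P(z) = ∫₀^∞ f(x/z)·4·cosh(x/2) dx` for Odlyzko's test function. -/
theorem stmt_2 (f : ℝ → ℝ)
    (hf1 : ∀ x, 0 ≤ x → x ≤ 1 → f x = (1 - x) * Real.cos (π * x) + Real.sin (π * x) / π)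
    (hf2 : ∀ x, 1 < x → f x = 0) :
    ∀ z : ℝ, 0 < z →
      ∫ x in Set.Ioi (0 : ℝ), f (x / z) * (4 * Real.cosh (x / 2)) =
        256 * π ^ 2 * z * Real.cosh (z / 4) ^ 2 / (z ^ 2 + 4 * π ^ 2) ^ 2 := by
  intro z hz
  have hz' : z ≠ 0 := ne_of_gt hz
  have hπ : (0:ℝ) < π := Real.pi_pos
  have hπ' : π ≠ 0 := ne_of_gt hπ
  have hD' : ((π/z)^2 + 1/4 : ℝ) ≠ 0 := by positivity
  set g : ℝ → ℝ := fun x =>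
    ((1 - x/z) * Real.cos (π*x/z) + Real.sin (π*x/z)/π) * (4 * Real.cosh (x/2)) with hg
  set F : ℝ → ℝ := fun x =>
    (1 - x/z) * ((π/z) * (Real.sin (π*x/z) * Real.cosh (x/2))
        + Real.cos (π*x/z) * Real.sinh (x/2) / 2) * (4/((π/z)^2 + 1/4))
    + ((π/z) * (Real.sin (π*x/z) * Real.sinh (x/2))
        + (1/4 - (π/z)^2) * (Real.cos (π*x/z) * Real.cosh (x/2))) * (4/(z*((π/z)^2 + 1/4)^2))
    + (Real.sin (π*x/z) * Real.sinh (x/2) / 2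
        - (π/z) * (Real.cos (π*x/z) * Real.cosh (x/2))) * (4/(π*((π/z)^2 + 1/4))) with hF
  have hgcont : Continuous g := by
    rw [hg]; fun_prop
  have hderiv : ∀ x : ℝ, HasDerivAt F (g x) x := by
    intro x
    have hlin : HasDerivAt (fun y : ℝ => π*y/z) (π/z) x := by
      simpa using ((hasDerivAt_id x).const_mul π).div_const z
    have hhalf : HasDerivAt (fun y : ℝ => y/2) (1/2 : ℝ) x := by
      simpa using (hasDerivAt_id x).div_const 2
    have hs := hlin.sin
    have hco := hlin.cos
    have hch := hhalf.cosh
    have hsh := hhalf.sinh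
    have hone : HasDerivAt (fun y : ℝ => 1 - y/z) (0 - 1/z) x := by
      simpa using ((hasDerivAt_id x).div_const z).const_sub (1:ℝ)
    have t1 := (hone.mul (((hs.mul hch).const_mul (π/z)).add ((hco.mul hsh).div_const 2))).mul_const
      (4/((π/z)^2 + 1/4))
    have t2 := (((hs.mul hsh).const_mul (π/z)).add ((hco.mul hch).const_mul (1/4 - (π/z)^2))).mul_const
      (4/(z*((π/z)^2 + 1/4)^2))
    have t3 := (((hs.mul hsh).div_const 2).sub ((hco.mul hch).const_mul (π/z))).mul_const
      (4/(π*((π/z)^2 + 1/4)))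
    have H := (t1.add t2).add t3
    refine H.congr_deriv ?_
    rw [hg]
    simp only [Pi.add_apply, Pi.mul_apply, Pi.sub_apply]
    field_simp
    ring
  have key : ∫ x in (0:ℝ)..z, g x =
      256 * π ^ 2 * z * Real.cosh (z / 4) ^ 2 / (z ^ 2 + 4 * π ^ 2) ^ 2 := by
    rw [intervalIntegral.integral_eq_sub_of_hasDerivAt (fun x _ => hderiv x)
      (hgcont.intervalIntegrable 0 z)]
    rw [hF]
    have h1 : π * z / z = π := by field_simp
    have h2 : π * 0 / z = 0 := by simp
    have h3 : (0:ℝ)/2 = 0 := by norm_num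
    simp only [h1, h2, h3, Real.sin_pi, Real.cos_pi, Real.sin_zero, Real.cos_zero,
      Real.sinh_zero, Real.cosh_zero]
    have h4 : z/2 = 2*(z/4) := by ring
    rw [h4, Real.cosh_two_mul]
    have h5 : Real.sinh (z/4)^2 = Real.cosh (z/4)^2 - 1 := by
      have := Real.cosh_sq_sub_sinh_sq (z/4); linarith
    rw [h5]
    have hD2 : (z^2 + 4*π^2 : ℝ) ≠ 0 := by positivity
    field_simp
    ring
  have hsplit : Set.Ioi (0:ℝ) = Set.Ioc 0 z ∪ Set.Ioi z := (Set.Ioc_union_Ioi_eq_Ioi hz.le).symm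
  have heq1 : ∀ x ∈ Set.Ioc (0:ℝ) z, f (x/z) * (4 * Real.cosh (x/2)) = g x := by
    intro x hx
    rw [hg, hf1 (x/z) (le_of_lt (div_pos hx.1 hz)) ((div_le_one hz).2 hx.2)]
    have : π * (x/z) = π * x / z := by ring
    rw [this]
  have heq2 : ∀ x ∈ Set.Ioi z, f (x/z) * (4 * Real.cosh (x/2)) = 0 := by
    intro x hx
    rw [hf2 (x/z) ((one_lt_div hz).2 hx), zero_mul]
  rw [hsplit, MeasureTheory.setIntegral_union (Set.Ioc_disjoint_Ioi le_rfl)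
      measurableSet_Ioi
      ((hgcont.integrableOn_Ioc).congr_fun (fun x hx => (heq1 x hx).symm) measurableSet_Ioc)
      ((integrableOn_zero).congr_fun (fun x hx => (heq2 x hx).symm) measurableSet_Ioi)]
  rw [MeasureTheory.setIntegral_congr_fun measurableSet_Ioc heq1,
    MeasureTheory.setIntegral_congr_fun measurableSet_Ioi heq2]
  simp only [MeasureTheory.integral_zero, add_zero]
  rw [← intervalIntegral.integral_of_le hz.le]
  exact key
end

section
/- Let G be a finite group and H a proper subgroup. Then there exists g ∈ G such that the conjugacy class of g is disjoint from H; equivalently, the permutation character φ_{G/H} of the action of G on the cosets G/H vanishes at some element of G. -/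
/-! By Burnside's lemma, a transitive action of a finite group has on average exactly one fixed
point per element. The identity fixes all `|X| ≥ 2` points, so some element fixes none. For the
action on `G ⧸ H`, the coset `xH` is fixed by `g` exactly when `x⁻¹ g x ∈ H`. -/

open MulAction

namespace MulAction

variable {G X : Type*} [Group G] [MulAction G X]

theorem sum_card_fixedBy_eq_card_group [IsPretransitive G X] [Nonempty X] [Fintype G]
    [∀ g : G, Fintype (fixedBy X g)] :
    ∑ g : G, Fintype.card (fixedBy X g) = Fintype.card G := by
  obtain ⟨_⟩ := (pretransitive_iff_unique_quotient_of_nonempty G X).mp inferInstance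
  rw [sum_card_fixedBy_eq_card_orbits_mul_card_group, Fintype.card_unique, one_mul]

theorem exists_fixedBy_eq_empty [IsPretransitive G X] [Finite G] [Finite X]
    (hX : 1 < Nat.card X) : ∃ g : G, fixedBy X g = ∅ := by
  classical
  have := Fintype.ofFinite G
  have := Fintype.ofFinite X
  have : Nonempty X := Nat.card_pos_iff.mp (by omega) |>.1
  by_contra! hfix
  have hlt : ∑ _g : G, 1 < ∑ g : G, Fintype.card (fixedBy X g) := by
    refine Finset.sum_lt_sum (fun g _ ↦ ?_) ⟨1, Finset.mem_univ _, ?_⟩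
    · exact Fintype.card_pos_iff.mpr (hfix g).to_subtype
    · simpa [fixedBy_one_eq_univ, Nat.card_eq_fintype_card] using hX
  rw [sum_card_fixedBy_eq_card_group] at hlt
  simp at hlt

end MulAction

theorem QuotientGroup.mk_mem_fixedBy_iff {G : Type*} [Group G] (H : Subgroup G) (g x : G) :
    (x : G ⧸ H) ∈ fixedBy (G ⧸ H) g ↔ x⁻¹ * g * x ∈ H := by
  rw [mem_fixedBy, MulAction.Quotient.smul_coe, smul_eq_mul, eq_comm, QuotientGroup.eq,
    ← mul_assoc]

/-- Jordan's theorem: a finite group is not the union of the conjugates of a proper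
subgroup; there is an element whose conjugacy class is disjoint from `H`. -/
theorem stmt_15 {G : Type*} [Group G] [Fintype G] (H : Subgroup G) (hH : H ≠ ⊤) :
    ∃ g : G, ∀ x : G, x * g * x⁻¹ ∉ H := by
  have hindex : 1 < Nat.card (G ⧸ H) := by
    rw [← Subgroup.index]
    exact Subgroup.one_lt_index_of_ne_top hH
  obtain ⟨g, hg⟩ := exists_fixedBy_eq_empty (G := G) hindex
  refine ⟨g, fun x hx ↦ ?_⟩
  have hfixed : ((x⁻¹ : G) : G ⧸ H) ∈ fixedBy (G ⧸ H) g := by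
    rwa [QuotientGroup.mk_mem_fixedBy_iff, inv_inv]
  simp [hg] at hfixed
end
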